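/- If U₁,...,Uₙ,V₁,...,Vₙ are 2n jointly independent uniform [0,1] random variables, then Cov( n⁻² ∑_{i,j} |Uᵢ - Vⱼ|, n⁻¹ ∑_i |Uᵢ - Vᵢ| ) = (n+4)/(90 n²). -/

import Mathlib

open MeasureTheory ProbabilityTheory Finset

/-!
Write `D i j = |U i - V j|`. By bilinearity the covariance is `n⁻³ ∑ i j k, Cov(D i j, D k k)`.
A term vanishes when `i ≠ k` and `j ≠ k`, by independence. For `i = j = k` it is the variance
`1/6 - 1/9 = 1/18`. When exactly one of `i = k`, `j = k` holds, the two distances share one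
uniform point `X` and are conditionally independent given it, so the covariance is the variance of
`g X` with `g x = E|x - Y| = x² - x + 1/2`, namely `7/60 - 1/9 = 1/180`. Summing,
`n / 18 + 2 n (n - 1) / 180 = n (n + 4) / 90`.
-/

theorem ProbabilityTheory.IndepFun.integral_comp_prodMk {Ω α β E : Type*} [MeasurableSpace Ω]
    [MeasurableSpace α] [MeasurableSpace β] [NormedAddCommGroup E] [NormedSpace ℝ E]
    {μ : Measure Ω} [IsFiniteMeasure μ] {X : Ω → α} {Y : Ω → β}
    (h : IndepFun X Y μ) (hX : AEMeasurable X μ) (hY : AEMeasurable Y μ)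
    {f : α × β → E} (hf : AEStronglyMeasurable f ((μ.map X).prod (μ.map Y))) :
    ∫ ω, f (X ω, Y ω) ∂μ = ∫ p, f p ∂((μ.map X).prod (μ.map Y)) := by
  rw [← h.map_prod_eq_prod_map_map hX hY] at hf ⊢
  exact (integral_map (hX.prodMk hY) hf).symm

local notation "𝕌" => (volume.restrict (Set.Icc (0 : ℝ) 1) : Measure ℝ)

lemma integral_uniform_eq_intervalIntegral (f : ℝ → ℝ) :
    ∫ x, f x ∂𝕌 = ∫ x in (0 : ℝ)..1, f x := by
  rw [integral_Icc_eq_integral_Ioc, intervalIntegral.integral_of_le zero_le_one]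

lemma integral_uniform_quartic (a b c d e : ℝ) :
    ∫ x, (a * x ^ 4 + b * x ^ 3 + c * x ^ 2 + d * x + e) ∂𝕌
      = a / 5 + b / 4 + c / 3 + d / 2 + e := by
  have hint : ∀ f : ℝ → ℝ, Continuous f → IntervalIntegrable f volume 0 1 :=
    fun f hf => hf.intervalIntegrable 0 1
  rw [integral_uniform_eq_intervalIntegral,
    intervalIntegral.integral_add (hint _ (by fun_prop)) (hint _ (by fun_prop)),
    intervalIntegral.integral_add (hint _ (by fun_prop)) (hint _ (by fun_prop)),
    intervalIntegral.integral_add (hint _ (by fun_prop)) (hint _ (by fun_prop)),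
    intervalIntegral.integral_add (hint _ (by fun_prop)) (hint _ (by fun_prop)),
    intervalIntegral.integral_const_mul d]
  norm_num [intervalIntegral.integral_const_mul, integral_id]
  ring

lemma integral_abs_sub_uniform {x : ℝ} (hx : x ∈ Set.Icc (0 : ℝ) 1) :
    ∫ z, |x - z| ∂𝕌 = x ^ 2 - x + 1 / 2 := by
  obtain ⟨h0, h1⟩ := hx
  have hint : ∀ a b : ℝ, IntervalIntegrable (fun z => |x - z|) volume a b :=
    fun a b => (by fun_prop : Continuous fun z => |x - z|).intervalIntegrable a b
  rw [integral_uniform_eq_intervalIntegral,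
    ← intervalIntegral.integral_add_adjacent_intervals (hint 0 x) (hint x 1)]
  have hleft : ∫ z in (0 : ℝ)..x, |x - z| = ∫ z in (0 : ℝ)..x, (x - z) := by
    refine intervalIntegral.integral_congr fun z hz => abs_of_nonneg ?_
    rw [Set.uIcc_of_le h0] at hz
    linarith [hz.2]
  have hright : ∫ z in x..1, |x - z| = ∫ z in x..1, (z - x) := by
    refine intervalIntegral.integral_congr fun z hz => abs_of_nonpos ?_ |>.trans (neg_sub _ _)
    rw [Set.uIcc_of_le h1] at hz
    linarith [hz.1]
  rw [hleft, hright,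
    intervalIntegral.integral_sub intervalIntegrable_const intervalIntegral.intervalIntegrable_id,
    intervalIntegral.integral_sub intervalIntegral.intervalIntegrable_id intervalIntegrable_const]
  simp only [integral_id, intervalIntegral.integral_const, smul_eq_mul]
  ring

lemma uniform_prod_eq_restrict :
    Measure.prod 𝕌 𝕌 = volume.restrict (Set.Icc (0 : ℝ) 1 ×ˢ Set.Icc (0 : ℝ) 1) := by
  rw [Measure.prod_restrict, ← Measure.volume_eq_prod]

lemma integrable_uniform_prod {f : ℝ × ℝ → ℝ} (hf : Continuous f) :
    Integrable f (Measure.prod 𝕌 𝕌) := by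
  rw [uniform_prod_eq_restrict]
  exact hf.continuousOn.integrableOn_compact (isCompact_Icc.prod isCompact_Icc)

lemma integrable_uniform_prod_prod {f : (ℝ × ℝ) × ℝ → ℝ} (hf : Continuous f) :
    Integrable f ((Measure.prod 𝕌 𝕌).prod 𝕌) := by
  rw [uniform_prod_eq_restrict, Measure.prod_restrict, ← Measure.volume_eq_prod]
  exact hf.continuousOn.integrableOn_compact
    ((isCompact_Icc.prod isCompact_Icc).prod isCompact_Icc)

lemma integral_abs_sub_uniform_prod : ∫ p, |p.1 - p.2| ∂(Measure.prod 𝕌 𝕌) = 1 / 3 := by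
  have hinner : ∀ᵐ x ∂𝕌,
      ∫ y, |x - y| ∂𝕌 = 0 * x ^ 4 + 0 * x ^ 3 + 1 * x ^ 2 + (-1) * x + 1 / 2 := by
    filter_upwards [ae_restrict_mem measurableSet_Icc] with x hx
    rw [integral_abs_sub_uniform hx]
    ring
  rw [integral_prod _ (integrable_uniform_prod (by fun_prop)), integral_congr_ae hinner,
    integral_uniform_quartic]
  norm_num

lemma integral_abs_sub_mul_self_uniform_prod :
    ∫ p, |p.1 - p.2| * |p.1 - p.2| ∂(Measure.prod 𝕌 𝕌) = 1 / 6 := by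
  have hinner (x : ℝ) : ∫ y, |x - y| * |x - y| ∂𝕌
      = 0 * x ^ 4 + 0 * x ^ 3 + 1 * x ^ 2 + (-1) * x + 1 / 3 := by
    have hsq : (fun y => |x - y| * |x - y|)
        = fun y => 0 * y ^ 4 + 0 * y ^ 3 + 1 * y ^ 2 + (-2 * x) * y + x ^ 2 :=
      funext fun y => by rw [abs_mul_abs_self]; ring
    rw [hsq, integral_uniform_quartic]
    ring
  rw [integral_prod _ (integrable_uniform_prod (by fun_prop)),
    integral_congr_ae (ae_of_all _ hinner), integral_uniform_quartic]
  norm_num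

lemma integral_abs_sub_mul_abs_sub_uniform_prod_prod :
    ∫ q, |q.1.1 - q.1.2| * |q.1.1 - q.2| ∂((Measure.prod 𝕌 𝕌).prod 𝕌) = 7 / 60 := by
  have hinner : ∀ᵐ p ∂(Measure.prod 𝕌 𝕌),
      ∫ z, |p.1 - p.2| * |p.1 - z| ∂𝕌 = |p.1 - p.2| * (p.1 ^ 2 - p.1 + 1 / 2) := by
    rw [uniform_prod_eq_restrict]
    filter_upwards [ae_restrict_mem (measurableSet_Icc.prod measurableSet_Icc)] with p hp
    rw [integral_const_mul, integral_abs_sub_uniform hp.1]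
  have hmiddle : ∀ᵐ x ∂𝕌, ∫ y, |x - y| * (x ^ 2 - x + 1 / 2) ∂𝕌
      = 1 * x ^ 4 + (-2) * x ^ 3 + 2 * x ^ 2 + (-1) * x + 1 / 4 := by
    filter_upwards [ae_restrict_mem measurableSet_Icc] with x hx
    rw [integral_mul_const, integral_abs_sub_uniform hx]
    ring
  rw [integral_prod _ (integrable_uniform_prod_prod (by fun_prop)), integral_congr_ae hinner,
    integral_prod _ (integrable_uniform_prod (by fun_prop)), integral_congr_ae hmiddle,
    integral_uniform_quartic]
  norm_num

section UniformSample

variable {Ω : Type*} [MeasurableSpace Ω] {μ : Measure Ω} {X Y Z : Ω → ℝ}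

lemma ae_mem_Icc_of_map_eq_uniform (hX : AEMeasurable X μ) (hXl : μ.map X = 𝕌) :
    ∀ᵐ ω ∂μ, X ω ∈ Set.Icc (0 : ℝ) 1 :=
  ae_of_ae_map hX (hXl ▸ ae_restrict_mem measurableSet_Icc)

variable [IsProbabilityMeasure μ]

lemma memLp_abs_sub_of_map_eq_uniform (hX : Measurable X) (hY : Measurable Y)
    (hXl : μ.map X = 𝕌) (hYl : μ.map Y = 𝕌) : MemLp (fun ω => |X ω - Y ω|) 2 μ := by
  refine MemLp.of_bound (hX.sub hY).abs.aestronglyMeasurable 1 ?_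
  filter_upwards [ae_mem_Icc_of_map_eq_uniform hX.aemeasurable hXl,
    ae_mem_Icc_of_map_eq_uniform hY.aemeasurable hYl] with ω hx hy
  rw [Real.norm_eq_abs, abs_abs, abs_le]
  constructor <;> linarith [hx.1, hx.2, hy.1, hy.2]

lemma integral_abs_sub_of_indepFun (hXY : IndepFun X Y μ) (hX : Measurable X) (hY : Measurable Y)
    (hXl : μ.map X = 𝕌) (hYl : μ.map Y = 𝕌) : ∫ ω, |X ω - Y ω| ∂μ = 1 / 3 := by
  rw [hXY.integral_comp_prodMk (f := fun p => |p.1 - p.2|) hX.aemeasurable hY.aemeasurable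
    (by fun_prop), hXl, hYl, integral_abs_sub_uniform_prod]

lemma covariance_abs_sub_self_of_indepFun (hXY : IndepFun X Y μ) (hX : Measurable X)
    (hY : Measurable Y) (hXl : μ.map X = 𝕌) (hYl : μ.map Y = 𝕌) :
    cov[fun ω => |X ω - Y ω|, fun ω => |X ω - Y ω|; μ] = 1 / 18 := by
  have hm := memLp_abs_sub_of_map_eq_uniform hX hY hXl hYl
  have hsq : ∫ ω, |X ω - Y ω| * |X ω - Y ω| ∂μ = 1 / 6 := by
    rw [hXY.integral_comp_prodMk (f := fun p => |p.1 - p.2| * |p.1 - p.2|) hX.aemeasurable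
      hY.aemeasurable (by fun_prop), hXl, hYl, integral_abs_sub_mul_self_uniform_prod]
  rw [covariance_eq_sub hm hm, Pi.mul_def, hsq, integral_abs_sub_of_indepFun hXY hX hY hXl hYl]
  norm_num

lemma covariance_abs_sub_abs_sub_of_indepFun (hXY : IndepFun X Y μ)
    (hXYZ : IndepFun (fun ω => (X ω, Y ω)) Z μ) (hX : Measurable X) (hY : Measurable Y)
    (hZ : Measurable Z) (hXl : μ.map X = 𝕌) (hYl : μ.map Y = 𝕌) (hZl : μ.map Z = 𝕌) :
    cov[fun ω => |X ω - Y ω|, fun ω => |X ω - Z ω|; μ] = 1 / 180 := by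
  have hXZ : IndepFun X Z μ := hXYZ.comp measurable_fst measurable_id
  have hprod : ∫ ω, |X ω - Y ω| * |X ω - Z ω| ∂μ = 7 / 60 := by
    rw [hXYZ.integral_comp_prodMk (f := fun q => |q.1.1 - q.1.2| * |q.1.1 - q.2|)
      (hX.prodMk hY).aemeasurable hZ.aemeasurable (by fun_prop),
      hXY.map_prod_eq_prod_map_map hX.aemeasurable hY.aemeasurable, hXl, hYl, hZl,
      integral_abs_sub_mul_abs_sub_uniform_prod_prod]
  rw [covariance_eq_sub (memLp_abs_sub_of_map_eq_uniform hX hY hXl hYl)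
    (memLp_abs_sub_of_map_eq_uniform hX hZ hXl hZl), Pi.mul_def, hprod,
    integral_abs_sub_of_indepFun hXY hX hY hXl hYl,
    integral_abs_sub_of_indepFun hXZ hX hZ hXl hZl]
  norm_num

-- On the diagonal `i = j = k` the three weights add up to the variance `1/18`.
lemma covariance_abs_sub_abs_sub_diag {ι : Type*} [DecidableEq ι] {U V : ι → Ω → ℝ}
    (hU : ∀ i, Measurable (U i)) (hV : ∀ i, Measurable (V i))
    (hInd : iIndepFun (Sum.elim U V) μ) (hUl : ∀ i, μ.map (U i) = 𝕌)
    (hVl : ∀ i, μ.map (V i) = 𝕌) (i j k : ι) :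
    cov[fun ω => |U i ω - V j ω|, fun ω => |U k ω - V k ω|; μ]
      = (if i = k then 1 / 180 else 0) + (if j = k then 1 / 180 else 0)
        + (if i = k ∧ j = k then 2 / 45 else 0) := by
  have hW : ∀ s, Measurable (Sum.elim U V s) := by
    rintro (a | b)
    exacts [hU a, hV b]
  have hUV (a b : ι) : IndepFun (U a) (V b) μ := hInd.indepFun Sum.inl_ne_inr
  have hVU (a b : ι) : IndepFun (V a) (U b) μ := hInd.indepFun Sum.inr_ne_inl
  by_cases hik : i = k <;> by_cases hjk : j = k
  · subst k j
    rw [covariance_abs_sub_self_of_indepFun (hUV i i) (hU i) (hV i) (hUl i) (hVl i)]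
    norm_num
  · subst k
    have hXYZ : IndepFun (fun ω => (U i ω, V j ω)) (V i) μ :=
      hInd.indepFun_prodMk hW (.inl i) (.inr j) (.inr i) Sum.inl_ne_inr (by simpa using hjk)
    rw [covariance_abs_sub_abs_sub_of_indepFun (hUV i j) hXYZ (hU i) (hV j) (hV i) (hUl i) (hVl j)
      (hVl i)]
    simp [hjk]
  · subst k
    have hXYZ : IndepFun (fun ω => (V j ω, U i ω)) (U j) μ :=
      hInd.indepFun_prodMk hW (.inr j) (.inl i) (.inl j) Sum.inr_ne_inl (by simpa using hik)
    simp_rw [abs_sub_comm (U _ _) (V j _)]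
    rw [covariance_abs_sub_abs_sub_of_indepFun (hVU j i) hXYZ (hV j) (hU i) (hU j) (hVl j) (hUl i)
      (hUl j)]
    simp [hik]
  · have hpairs : IndepFun (fun ω => (U i ω, V j ω)) (fun ω => (U k ω, V k ω)) μ :=
      hInd.indepFun_prodMk_prodMk hW (.inl i) (.inr j) (.inl k) (.inr k) (by simpa using hik)
        Sum.inl_ne_inr Sum.inr_ne_inl (by simpa using hjk)
    have hcont : Measurable fun p : ℝ × ℝ => |p.1 - p.2| := by fun_prop
    refine ((hpairs.comp hcont hcont).covariance_eq_zero
      (memLp_abs_sub_of_map_eq_uniform (hU i) (hV j) (hUl i) (hVl j))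
      (memLp_abs_sub_of_map_eq_uniform (hU k) (hV k) (hUl k) (hVl k))).trans ?_
    simp [hik, hjk]

lemma sum_sum_sum_ite_eq_card_mul {ι : Type*} [Fintype ι] [DecidableEq ι] :
    ∑ i : ι, ∑ j : ι, ∑ k : ι, ((if i = k then 1 / 180 else 0)
        + (if j = k then 1 / 180 else 0) + (if i = k ∧ j = k then 2 / 45 else 0) : ℝ)
      = Fintype.card ι * (Fintype.card ι + 4) / 90 := by
  simp only [ite_and, sum_add_distrib, sum_ite_eq, sum_ite_eq', mem_univ, if_true, sum_const,
    card_univ, nsmul_eq_mul]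
  ring

end UniformSample

theorem cov_double_sum_diag_sum_general
    {Ω : Type*} [MeasureSpace Ω] [IsProbabilityMeasure (ℙ : Measure Ω)]
    (n : ℕ) (U V : Fin n → Ω → ℝ)
    (hU : ∀ i, Measurable (U i)) (hV : ∀ i, Measurable (V i))
    (hInd : iIndepFun (Sum.elim U V) ℙ)
    (hUunif : ∀ i, Measure.map (U i) ℙ = volume.restrict (Set.Icc (0:ℝ) 1))
    (hVunif : ∀ i, Measure.map (V i) ℙ = volume.restrict (Set.Icc (0:ℝ) 1)) :
    (∫ ω, ((1 / (n:ℝ)^2) * ∑ i : Fin n, ∑ j : Fin n, |U i ω - V j ω|)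
        * ((1 / (n:ℝ)) * ∑ i : Fin n, |U i ω - V i ω|) ∂ℙ)
      - (∫ ω, (1 / (n:ℝ)^2) * ∑ i : Fin n, ∑ j : Fin n, |U i ω - V j ω| ∂ℙ)
        * (∫ ω, (1 / (n:ℝ)) * ∑ i : Fin n, |U i ω - V i ω| ∂ℙ)
      = ((n:ℝ) + 4) / (90 * (n:ℝ)^2) := by
  have hm (i j : Fin n) : MemLp (fun ω => |U i ω - V j ω|) 2 ℙ :=
    memLp_abs_sub_of_map_eq_uniform (hU i) (hV j) (hUunif i) (hVunif j)
  have hrow (i : Fin n) : MemLp (fun ω => ∑ j, |U i ω - V j ω|) 2 ℙ :=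
    memLp_finsetSum univ fun j _ => hm i j
  have hdiag : MemLp (fun ω => ∑ k, |U k ω - V k ω|) 2 ℙ :=
    memLp_finsetSum univ fun k _ => hm k k
  have hcov := covariance_eq_sub
    ((memLp_finsetSum univ fun i _ => hrow i).const_mul (1 / (n : ℝ) ^ 2))
    (hdiag.const_mul (1 / (n : ℝ)))
  rw [Pi.mul_def] at hcov
  rw [← hcov, covariance_const_mul_left, covariance_const_mul_right,
    covariance_fun_sum_left hrow hdiag]
  simp_rw [covariance_fun_sum_fun_sum (fun j => hm _ j) (fun k => hm k k),
    covariance_abs_sub_abs_sub_diag hU hV hInd hUunif hVunif]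
  rw [sum_sum_sum_ite_eq_card_mul, Fintype.card_fin]
  rcases eq_or_ne (n : ℝ) 0 with hn | hn
  · simp [hn]
  · field_simp

theorem cov_double_sum_diag_sum
    {Ω : Type*} [MeasureSpace Ω] [IsProbabilityMeasure (ℙ : Measure Ω)]
    (n : ℕ) (hn : 1 ≤ n) (U V : Fin n → Ω → ℝ)
    (hU : ∀ i, Measurable (U i)) (hV : ∀ i, Measurable (V i))
    (hInd : iIndepFun (Sum.elim U V) ℙ)
    (hUunif : ∀ i, Measure.map (U i) ℙ = volume.restrict (Set.Icc (0:ℝ) 1))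
    (hVunif : ∀ i, Measure.map (V i) ℙ = volume.restrict (Set.Icc (0:ℝ) 1)) :
    (∫ ω, ((1 / (n:ℝ)^2) * ∑ i : Fin n, ∑ j : Fin n, |U i ω - V j ω|)
        * ((1 / (n:ℝ)) * ∑ i : Fin n, |U i ω - V i ω|) ∂ℙ)
      - (∫ ω, (1 / (n:ℝ)^2) * ∑ i : Fin n, ∑ j : Fin n, |U i ω - V j ω| ∂ℙ)
        * (∫ ω, (1 / (n:ℝ)) * ∑ i : Fin n, |U i ω - V i ω| ∂ℙ)
      = ((n:ℝ) + 4) / (90 * (n:ℝ)^2) :=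
  cov_double_sum_diag_sum_general n U V hU hV hInd hUunif hVunif
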